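/- Let P = Q diag(ω) Qᵀ with Q an orthogonal n×n real matrix and ω ∈ ℝⁿ with all ωᵢ > 0; let ω_min = minᵢ ωᵢ, q ∈ ℝⁿ, s = Qᵀ𝟏, q̃ = Qᵀq, and for 0 ≤ α < ω_min define g(α) = −(q + (α/2)𝟏)ᵀ (P − αI)⁻¹ (q + (α/2)𝟏). Then g is differentiable at every α ∈ [0, ω_min) with derivative g'(α) = n/4 − Σᵢ ((q̃ᵢ + (1/2)ωᵢ sᵢ)/(ωᵢ − α))². -/

import Mathlib

/-!
Since `Q` is orthogonal, `P - αI = Q diag(ω - α) Qᵀ`, so below `ω_min` the dual function is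
`g(α) = -∑ᵢ (q̃ᵢ + α sᵢ/2)² / (ωᵢ - α)`. Differentiating termwise gives
`((q̃ᵢ + ωᵢ sᵢ/2)/(ωᵢ - α))² - sᵢ²/4` per term, and `∑ᵢ sᵢ² = ‖𝟏‖² = n`.
-/

open Matrix

namespace Matrix

variable {m K : Type*} [Fintype m] [DecidableEq m]

theorem conj_diagonal_sub_smul_one [CommRing K] {Q : Matrix m m K} (hQ : Q * Qᵀ = 1)
    (d : m → K) (c : K) :
    Q * diagonal d * Qᵀ - c • 1 = Q * diagonal (fun i => d i - c) * Qᵀ := by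
  rw [← diagonal_sub, mul_sub, sub_mul, ← smul_one_eq_diagonal, Matrix.mul_smul, Matrix.mul_one,
    Matrix.smul_mul, hQ]

theorem inv_conj_diagonal [Field K] {Q : Matrix m m K} (hQ : Qᵀ * Q = 1) {d : m → K}
    (hd : ∀ i, d i ≠ 0) : (Q * diagonal d * Qᵀ)⁻¹ = Q * diagonal d⁻¹ * Qᵀ := by
  apply inv_eq_right_inv
  have hdd : diagonal d * diagonal d⁻¹ = 1 := by
    rw [diagonal_mul_diagonal, ← diagonal_one]
    exact congrArg diagonal (funext fun i => mul_inv_cancel₀ (hd i))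
  calc Q * diagonal d * Qᵀ * (Q * diagonal d⁻¹ * Qᵀ)
      = Q * (diagonal d * (Qᵀ * Q) * diagonal d⁻¹) * Qᵀ := by simp only [Matrix.mul_assoc]
    _ = 1 := by rw [hQ, Matrix.mul_one, hdd, Matrix.mul_one, mul_eq_one_comm.mp hQ]

theorem dotProduct_conj_diagonal_mulVec [CommSemiring K] (Q : Matrix m m K) (d v : m → K) :
    v ⬝ᵥ (Q * diagonal d * Qᵀ) *ᵥ v = ∑ i, d i * (Qᵀ *ᵥ v) i ^ 2 := by
  rw [← mulVec_mulVec, ← mulVec_mulVec, dotProduct_mulVec, ← mulVec_transpose]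
  simp only [dotProduct, mulVec_diagonal]
  exact Finset.sum_congr rfl fun i _ => by ring

theorem sum_transpose_mulVec_sq [CommRing K] {Q : Matrix m m K} (hQ : Q * Qᵀ = 1) (v : m → K) :
    ∑ i, (Qᵀ *ᵥ v) i ^ 2 = ∑ i, v i ^ 2 := by
  have h := dotProduct_conj_diagonal_mulVec Q 1 v
  simpa [hQ, dotProduct, sq] using h.symm

end Matrix

theorem hasDerivAt_sq_div_sub (a b w : ℝ) {α : ℝ} (hα : w - α ≠ 0) :
    HasDerivAt (fun x => (a + x / 2 * b) ^ 2 / (w - x))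
      (((a + 1 / 2 * w * b) / (w - α)) ^ 2 - b ^ 2 / 4) α := by
  have hlin : HasDerivAt (fun x : ℝ => a + x / 2 * b) (1 / 2 * b) α :=
    ((hasDerivAt_id' α).div_const 2 |>.mul_const b).const_add a
  have hden : HasDerivAt (fun x : ℝ => w - x) (-1) α := (hasDerivAt_id' α).const_sub w
  refine ((hlin.fun_pow 2).fun_div hden hα).congr_deriv ?_
  -- `(a + wb/2)² - b²(w - α)²/4 = (a + αb/2)(a + wb - αb/2)`, the quotient-rule numerator.
  field_simp
  ring

theorem stmt_12_general (n : ℕ) (Q : Matrix (Fin n) (Fin n) ℝ) (hQ : Qᵀ * Q = 1)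
    (ω : Fin n → ℝ)
    (P : Matrix (Fin n) (Fin n) ℝ) (hP : P = Q * Matrix.diagonal ω * Qᵀ)
    (ωmin : ℝ) (hωmin : IsLeast (Set.range ω) ωmin)
    (q s qt : Fin n → ℝ)
    (hs : s = Qᵀ *ᵥ (fun _ => 1)) (hqt : qt = Qᵀ *ᵥ q)
    (g : ℝ → ℝ)
    (hg : ∀ α, g α = -((q + (α / 2) • (fun _ => 1 : Fin n → ℝ)) ⬝ᵥ
      ((P - α • (1 : Matrix (Fin n) (Fin n) ℝ))⁻¹ *ᵥ
        (q + (α / 2) • (fun _ => 1 : Fin n → ℝ))))) :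
    ∀ α : ℝ, 0 ≤ α → α < ωmin →
      HasDerivAt g
        ((n : ℝ) / 4 - ∑ i, ((qt i + (1 / 2) * ω i * s i) / (ω i - α)) ^ 2) α := by
  intro α _ hα
  have hQQ : Q * Qᵀ = 1 := mul_eq_one_comm.mp hQ
  have hgap : ∀ x < ωmin, ∀ i, ω i - x ≠ 0 := fun x hx i =>
    sub_ne_zero.mpr (hx.trans_le (hωmin.2 ⟨i, rfl⟩)).ne'
  have hclosed : ∀ x < ωmin, g x = -∑ i, (qt i + x / 2 * s i) ^ 2 / (ω i - x) := by
    intro x hx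
    rw [hg, hP, conj_diagonal_sub_smul_one hQQ, inv_conj_diagonal hQ (hgap x hx),
      dotProduct_conj_diagonal_mulVec]
    simp only [mulVec_add, mulVec_smul, ← hs, ← hqt, Pi.add_apply, Pi.smul_apply, Pi.inv_apply,
      smul_eq_mul, inv_mul_eq_div]
  have hsum_sq : ∑ i, s i ^ 2 / 4 = (n : ℝ) / 4 := by
    rw [← Finset.sum_div, hs, sum_transpose_mulVec_sq hQQ]
    simp
  have hderiv := (HasDerivAt.fun_sum fun i (_ : i ∈ Finset.univ) =>
    hasDerivAt_sq_div_sub (qt i) (s i) (ω i) (hgap α hα i)).neg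
  rw [Finset.sum_sub_distrib, hsum_sq, neg_sub] at hderiv
  exact hderiv.congr_of_eventuallyEq
    (Filter.eventuallyEq_of_mem (Iio_mem_nhds hα) hclosed)

/-- The restricted dual function `g(α) = -(q + (α/2)𝟏)ᵀ(P - αI)⁻¹(q + (α/2)𝟏)` is
differentiable on `[0, ω_min)` with derivative
`g'(α) = n/4 - ∑ᵢ ((q̃ᵢ + ωᵢsᵢ/2)/(ωᵢ - α))²`. -/
theorem stmt_12 (n : ℕ) (Q : Matrix (Fin n) (Fin n) ℝ) (hQ : Qᵀ * Q = 1)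
    (ω : Fin n → ℝ) (hω : ∀ i, 0 < ω i)
    (P : Matrix (Fin n) (Fin n) ℝ) (hP : P = Q * Matrix.diagonal ω * Qᵀ)
    (ωmin : ℝ) (hωmin : IsLeast (Set.range ω) ωmin)
    (q s qt : Fin n → ℝ)
    (hs : s = Qᵀ *ᵥ (fun _ => 1)) (hqt : qt = Qᵀ *ᵥ q)
    (g : ℝ → ℝ)
    (hg : ∀ α, g α = -((q + (α / 2) • (fun _ => 1 : Fin n → ℝ)) ⬝ᵥ
      ((P - α • (1 : Matrix (Fin n) (Fin n) ℝ))⁻¹ *ᵥ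
        (q + (α / 2) • (fun _ => 1 : Fin n → ℝ))))) :
    ∀ α : ℝ, 0 ≤ α → α < ωmin →
      HasDerivAt g
        ((n : ℝ) / 4 - ∑ i, ((qt i + (1 / 2) * ω i * s i) / (ω i - α)) ^ 2) α :=
  stmt_12_general n Q hQ ω P hP ωmin hωmin q s qt hs hqt g hg
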